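/- Let d ≥ 1 be an integer, let n_1, …, n_d ∈ ℤ, and let c_1, …, c_d ∈ ℂ satisfy |c_i| = 1 for all i. Define F(z) = Σ_{0 < m_1 < ⋯ < m_d} (∏_{i=1}^d c_i^{m_i}) · z^{m_d} · ∏_{i=1}^d m_i^{−n_i} and G(z) = Σ_{0 < m_1 < ⋯ < m_d} (∏_{i=1}^d c_i^{m_i}) · z^{m_d} · (∏_{i=1}^{d−1} m_i^{−n_i}) · m_d^{−(n_d − 1)}, both convergent for |z| < 1. Then for every z ∈ ℂ with |z| < 1, F is complex-differentiable at z and z · F′(z) = G(z). -/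

import Mathlib

lemma summable_pi_prod {w : ℕ → ℝ} (hw : Summable w) (hw0 : ∀ t, 0 ≤ w t) :
    ∀ d : ℕ, Summable (fun g : Fin d → ℕ => ∏ i, w (g i))
  | 0 => Summable.of_finite
  | (d+1) => by
      have h := hw.mul_of_nonneg (summable_pi_prod hw hw0 d) hw0
        (fun g => Finset.prod_nonneg fun i _ => hw0 _)
      rw [← (Fin.consEquiv (fun _ : Fin (d+1) => ℕ)).summable_iff]
      convert h using 1
      funext p
      simp [Fin.prod_univ_succ, Fin.consEquiv]



/-- The localized multiple polylogarithm series
`F(w) = Σ_{0<m₁<⋯<m_d} (∏ cᵢ^{mᵢ}) · w^{m_d} · ∏ mᵢ^{-nᵢ}`. -/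
noncomputable def locMPL (d : ℕ) (hd : 1 ≤ d) (n : Fin d → ℤ) (c : Fin d → ℂ)
    (w : ℂ) : ℂ :=
  ∑' m : {f : Fin d → ℕ // StrictMono f ∧ ∀ i, 0 < f i},
    (∏ i, c i ^ (m.1 i)) * w ^ (m.1 ⟨d - 1, by omega⟩) *
      ∏ i, ((m.1 i : ℂ)) ^ (-(n i))

/-- The series `G(w)` obtained from `F` by lowering the last exponent `n_d` by one. -/
noncomputable def locMPLlowered (d : ℕ) (hd : 1 ≤ d) (n : Fin d → ℤ) (c : Fin d → ℂ)
    (w : ℂ) : ℂ :=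
  ∑' m : {f : Fin d → ℕ // StrictMono f ∧ ∀ i, 0 < f i},
    (∏ i, c i ^ (m.1 i)) * w ^ (m.1 ⟨d - 1, by omega⟩) *
      (∏ i ∈ Finset.univ.erase ⟨d - 1, by omega⟩, ((m.1 i : ℂ)) ^ (-(n i))) *
      ((m.1 ⟨d - 1, by omega⟩ : ℂ)) ^ (-(n ⟨d - 1, by omega⟩ - 1))

/-- the operator `z·d/dz` lowers the last exponent of a localized
multiple polylogarithm by one, in the complex setting. -/
theorem zDeriv_locMPL_complex (d : ℕ) (hd : 1 ≤ d) (n : Fin d → ℤ) (c : Fin d → ℂ)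
    (hc : ∀ i, ‖c i‖ = 1) :
    ∀ z : ℂ, ‖z‖ < 1 →
      DifferentiableAt ℂ (locMPL d hd n c) z ∧
      z * deriv (locMPL d hd n c) z = locMPLlowered d hd n c z := by
    classical
  intro z hz
  set L : Fin d := ⟨d - 1, by omega⟩ with hLdef
  set S := {f : Fin d → ℕ // StrictMono f ∧ ∀ i, 0 < f i} with hS
  -- basic facts about indices
  have hmono : ∀ m : S, ∀ i, m.1 i ≤ m.1 L := by
    intro m i
    exact m.2.1.monotone (by simp [hLdef, Fin.le_def]; omega)
  have hpos : ∀ m : S, ∀ i, 1 ≤ m.1 i := fun m i => m.2.2 i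
  -- radii
  set r : ℝ := (‖z‖ + 1) / 2 with hrdef
  have habs : 0 ≤ ‖z‖ := norm_nonneg z
  have hr0 : 0 < r := by positivity
  have hzr : ‖z‖ < r := by rw [hrdef]; linarith
  have hr1 : r < 1 := by rw [hrdef]; linarith
  set s : ℝ := r ^ ((d : ℝ)⁻¹) with hsdef
  have hs0 : 0 < s := Real.rpow_pos_of_pos hr0 _
  have hs1 : s < 1 := Real.rpow_lt_one hr0.le hr1 (by positivity)
  have hsd : s ^ d = r := Real.rpow_inv_natCast_pow hr0.le (by omega)
  set N : ℕ := ∑ i, (n i).natAbs with hNdef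
  have hnN : ∀ i, -(n i) ≤ (N : ℤ) := by
    intro i
    have h1 : -(n i) ≤ |n i| := neg_le_abs _
    have h2 : (n i).natAbs ≤ N := by
      rw [hNdef]
      exact Finset.single_le_sum (f := fun j => (n j).natAbs) (fun j _ => Nat.zero_le _) (Finset.mem_univ i)
    calc -(n i) ≤ |n i| := h1
      _ = ((n i).natAbs : ℤ) := (Int.abs_eq_natAbs _)
      _ ≤ (N : ℤ) := by exact_mod_cast h2
  set w : ℕ → ℝ := fun t => (t : ℝ) ^ (N + 1) * s ^ t with hwdef
  have hw0 : ∀ t, 0 ≤ w t := fun t => by positivity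
  have hwsum : Summable w :=
    summable_pow_mul_geometric_of_norm_lt_one _
      (by rw [Real.norm_eq_abs, abs_of_pos hs0]; exact hs1)
  set u : S → ℝ := fun m => r⁻¹ * ∏ i, w (m.1 i) with hudef
  have husum : Summable u :=
    (((summable_pi_prod hwsum hw0 d).comp_injective Subtype.val_injective)).mul_left _
  -- the terms and their derivatives
  set g : S → ℂ → ℂ := fun m y =>
    (∏ i, c i ^ (m.1 i)) * y ^ (m.1 L) * ∏ i, ((m.1 i : ℂ)) ^ (-(n i)) with hgdef
  set g' : S → ℂ → ℂ := fun m y =>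
    (∏ i, c i ^ (m.1 i)) * ((m.1 L : ℂ) * y ^ (m.1 L - 1)) *
      ∏ i, ((m.1 i : ℂ)) ^ (-(n i)) with hg'def
  have hderiv : ∀ m : S, ∀ y : ℂ, y ∈ Metric.ball (0 : ℂ) r →
      HasDerivAt (g m) (g' m y) y := by
    intro m y _
    exact ((hasDerivAt_pow (m.1 L) y).const_mul (∏ i, c i ^ (m.1 i))).mul_const _
  -- norm bounds
  have hA : ∀ m : S, ‖∏ i, c i ^ (m.1 i)‖ = 1 := by
    intro m
    rw [norm_prod]
    simp [norm_pow, hc]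
  have hB : ∀ m : S, ‖∏ i, ((m.1 i : ℂ)) ^ (-(n i))‖ ≤
      ∏ i, (m.1 i : ℝ) ^ N := by
    intro m
    rw [norm_prod]
    apply Finset.prod_le_prod (fun i _ => (norm_nonneg _))
    intro i _
    rw [norm_zpow, Complex.norm_natCast]
    have h1 : (1 : ℝ) ≤ (m.1 i : ℝ) := by exact_mod_cast hpos m i
    calc (m.1 i : ℝ) ^ (-(n i)) ≤ (m.1 i : ℝ) ^ (N : ℤ) :=
          zpow_le_zpow_right₀ h1 (hnN i)
      _ = (m.1 i : ℝ) ^ N := zpow_natCast _ _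
  have hbound : ∀ m : S, ∀ y : ℂ, y ∈ Metric.ball (0 : ℂ) r → ‖g' m y‖ ≤ u m := by
    intro m y hy
    have hyr : ‖y‖ ≤ r := by
      rw [Metric.mem_ball, dist_zero_right] at hy
      exact le_of_lt hy
    set k := m.1 L with hk
    have hk1 : 1 ≤ k := hpos m L
    have hnorm : ‖g' m y‖ = ‖∏ i, c i ^ (m.1 i)‖ *
        ((k : ℝ) * ‖y‖ ^ (k - 1)) * ‖∏ i, ((m.1 i : ℂ)) ^ (-(n i))‖ := by
      simp [hg'def, norm_mul, Complex.norm_natCast, norm_pow]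
      exact Or.inl (Or.inl rfl)
    rw [hnorm, hA, one_mul]
    have step1 : (k : ℝ) * ‖y‖ ^ (k - 1) *
        ‖∏ i, ((m.1 i : ℂ)) ^ (-(n i))‖ ≤
        (k : ℝ) * r ^ (k - 1) * ∏ i, (m.1 i : ℝ) ^ N := by
      apply mul_le_mul
      · apply mul_le_mul_of_nonneg_left _ (by positivity)
        exact pow_le_pow_left₀ (norm_nonneg y) hyr _
      · exact hB m
      · exact norm_nonneg _
      · positivity
    refine step1.trans ?_
    -- (k) * r^(k-1) * ∏ mᵢ^N ≤ r⁻¹ * ∏ (mᵢ^(N+1) * s^mᵢ)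
    have hprod : ∏ i, w (m.1 i) = (∏ i, (m.1 i : ℝ) ^ (N + 1)) * s ^ (∑ i, m.1 i) := by
      rw [hwdef, Finset.prod_mul_distrib, Finset.prod_pow_eq_pow_sum]
    have hkle : (k : ℝ) * ∏ i, (m.1 i : ℝ) ^ N ≤ ∏ i, (m.1 i : ℝ) ^ (N + 1) := by
      have h1 : ∀ i, (m.1 i : ℝ) ^ (N + 1) = (m.1 i : ℝ) ^ N * (m.1 i : ℝ) := by
        intro i; ring
      calc (k : ℝ) * ∏ i, (m.1 i : ℝ) ^ N ≤ (∏ i, (m.1 i : ℝ)) * ∏ i, (m.1 i : ℝ) ^ N := by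
            apply mul_le_mul_of_nonneg_right _ (by positivity)
            have hnat : k ≤ ∏ i, m.1 i :=
              Finset.single_le_prod' (fun i _ => hpos m i) (Finset.mem_univ L)
            exact_mod_cast hnat
        _ = ∏ i, (m.1 i : ℝ) ^ (N + 1) := by
            rw [← Finset.prod_mul_distrib]
            exact Finset.prod_congr rfl fun i _ => by ring
    have hrk : r ^ (k - 1) ≤ r⁻¹ * s ^ (∑ i, m.1 i) := by
      have h1 : s ^ (d * k) ≤ s ^ (∑ i, m.1 i) := by
        apply pow_le_pow_of_le_one hs0.le hs1.le
        calc ∑ i, m.1 i ≤ ∑ _i : Fin d, k := Finset.sum_le_sum fun i _ => hmono m i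
          _ = d * k := by simp [Finset.sum_const, mul_comm]
      have h2 : r ^ k = s ^ (d * k) := by
        rw [← hsd, ← pow_mul]
      have h3 : r ^ (k - 1) = r⁻¹ * r ^ k := by
        rw [← pow_sub_one_mul (by omega : k ≠ 0) r]
        field_simp
      rw [h3, h2]
      exact mul_le_mul_of_nonneg_left h1 (by positivity)
    calc (k : ℝ) * r ^ (k - 1) * ∏ i, (m.1 i : ℝ) ^ N
        = ((k : ℝ) * ∏ i, (m.1 i : ℝ) ^ N) * r ^ (k - 1) := by ring
      _ ≤ (∏ i, (m.1 i : ℝ) ^ (N + 1)) * (r⁻¹ * s ^ (∑ i, m.1 i)) := by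
          apply mul_le_mul hkle hrk (by positivity)
          positivity
      _ = u m := by simp only [hudef]; rw [hprod]; ring
  -- summability at 0
  have hg0 : Summable fun m : S => g m 0 := by
    have : (fun m : S => g m 0) = fun _ => (0 : ℂ) := by
      funext m
      have hk1 : 1 ≤ m.1 L := hpos m L
      simp [hgdef, zero_pow (by omega : m.1 L ≠ 0)]
    rw [this]
    exact summable_zero
  have hzball : z ∈ Metric.ball (0 : ℂ) r := by
    rw [Metric.mem_ball, dist_zero_right]
    exact hzr
  have key : HasDerivAt (fun y => ∑' m : S, g m y) (∑' m : S, g' m z) z :=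
    hasDerivAt_tsum_of_isPreconnected husum Metric.isOpen_ball
      ((convex_ball (0 : ℂ) r).isPreconnected) hderiv hbound
      (Metric.mem_ball_self hr0) hg0 hzball
  have hFeq : locMPL d hd n c = fun y => ∑' m : S, g m y := rfl
  rw [hFeq]
  refine ⟨key.differentiableAt, ?_⟩
  rw [key.deriv, ← tsum_mul_left]
  rw [locMPLlowered]
  apply tsum_congr
  intro m
  set k := m.1 L with hk
  have hk1 : 1 ≤ k := hpos m L
  have hkC : ((k : ℂ)) ≠ 0 := by
    exact_mod_cast (by omega : k ≠ 0)
  have hsplit : (∏ i, ((m.1 i : ℂ)) ^ (-(n i))) =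
      (∏ i ∈ Finset.univ.erase L, ((m.1 i : ℂ)) ^ (-(n i))) * ((k : ℂ)) ^ (-(n L)) := by
    rw [Finset.prod_erase_mul Finset.univ _ (Finset.mem_univ L)]
  have hzpow : ((k : ℂ)) ^ (-(n L - 1)) = (k : ℂ) * ((k : ℂ)) ^ (-(n L)) := by
    rw [show -(n L - 1) = 1 + -(n L) by ring, zpow_add₀ hkC, zpow_one]
  have hzk : z ^ (k - 1) * z = z ^ k := by
    rw [← pow_succ]
    congr 1
    omega
  show z * g' m z = _
  rw [hg'def]
  simp only []
  rw [hsplit, hzpow, ← hzk]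
  ring
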